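/- Let T ⊆ (2Ω)^{<ω} be a well-founded fat tree of rank β, and let L_T be the lexicographic order on T⁺ = {σ⌢a : σ ∈ T, σ⌢a ∉ T, a ∈ ω ∪ Ω ∪ {∞}}. Then the Hausdorff rank of L_T is exactly β + 1. -/

import Mathlib

/-- The symbols `ω ∪ Ω ∪ {∞}`: `fin n` is the natural number `n`, `pair n` is the
pair `(n, n+1) ∈ Ω`, and `infty` is `∞`. -/
inductive Symb : Type
  | fin : ℕ → Symb
  | pair : ℕ → Symb
  | infty : Symb
deriving DecidableEq

/-- Position of a symbol in the order `0 < (0,1) < 1 < (1,2) < 2 < ⋯ < ∞`. -/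
def Symb.val : Symb → WithTop ℕ
  | .fin n => ((2 * n : ℕ) : WithTop ℕ)
  | .pair n => ((2 * n + 1 : ℕ) : WithTop ℕ)
  | .infty => ⊤

theorem Symb.val_injective : Function.Injective Symb.val := by
  rintro (n | n | _) (m | m | _) h <;>
    simp only [Symb.val] at h <;>
    first
      | rfl
      | (norm_cast at h <;> first | (congr 1; omega) | (exact absurd h (by omega)))

/-- The linear order `0 < (0,1) < 1 < (1,2) < 2 < ⋯ < ∞` on `ω ∪ Ω ∪ {∞}`. -/
instance : LinearOrder Symb := LinearOrder.lift' Symb.val Symb.val_injective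

noncomputable section

variable {α : Type*}

/-- A tree on `α`: a set of finite sequences closed under initial segments. -/
def IsTree (T : Set (List α)) : Prop :=
  ∀ σ ∈ T, ∀ τ : List α, τ <+: σ → τ ∈ T

/-- `σ` lies on an infinite path of `T`. -/
def IllNode (T : Set (List α)) (σ : List α) : Prop :=
  ∃ f : ℕ → α, ∀ n : ℕ, σ ++ List.ofFn (fun i : Fin n => f i) ∈ T

/-- `T` is well-founded: it has no infinite path. -/
def WellFoundedTree (T : Set (List α)) : Prop := ¬ IllNode T []

/-- The set of nodes of `T` removed within `γ` rounds of leaf-removal: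
a node is removed by stage `γ` if each of its children was removed at some earlier stage. -/
def prunedAt (T : Set (List α)) (γ : Ordinal.{0}) : Set (List α) :=
  Ordinal.lt_wf.fix (C := fun _ => Set (List α))
    (fun γ ih =>
      {σ | σ ∈ T ∧ ∀ a : α, σ ++ [a] ∈ T → ∃ β : Ordinal.{0}, ∃ h : β < γ, σ ++ [a] ∈ ih β h}) γ

open Classical in
/-- The rank of a node of `T`: nodes on an infinite path get rank `∞ = ⊤`;
well-founded nodes get the paper's ordinal rank, so that leaves have rank `1` and
the rank of a node is computed from the stage at which leaf-removal removes it. -/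
def erank (T : Set (List α)) (σ : List α) : WithTop Ordinal.{0} :=
  if IllNode T σ then ⊤
  else ((sInf {γ : Ordinal.{0} | σ ∈ prunedAt T γ} + 1 : Ordinal) : WithTop Ordinal.{0})

/-- `β < γ` for extended ranks, with the paper's convention that `∞ < ∞` is true. -/
def eLT (β γ : WithTop Ordinal.{0}) : Prop := β < γ ∨ (β = ⊤ ∧ γ = ⊤)

/-- `T` is fat: every node `σ ∈ T` of rank `α` has, for every (attained, i.e. `≥ 1`) rank
`β < α`, infinitely many children in `T` of rank exactly `β`. -/
def FatTree (T : Set (List α)) : Prop :=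
  ∀ σ ∈ T, ∀ β : WithTop Ordinal.{0}, 1 ≤ β → eLT β (erank T σ) →
    {a : α | σ ++ [a] ∈ T ∧ erank T (σ ++ [a]) = β}.Infinite

end

noncomputable section

/-- Given a relation `E` on a linear order, `hausdorffRel E a b` says that the closed
interval between `a` and `b` is covered by finitely many `E`-classes; when `E` is an
equivalence relation this is the pullback of the Hausdorff relation on the quotient. -/
def hausdorffRel {L : Type*} [LinearOrder L] (E : L → L → Prop) (a b : L) : Prop :=
  ∃ s : Finset L, ∀ c : L, min a b ≤ c → c ≤ max a b → ∃ d ∈ s, E c d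

/-- The transfinite iterates of the Hausdorff derivative relation on a linear order `L`:
`H_0` is equality, `H_{α+1}` is the pullback of the Hausdorff relation on the quotient
`L / H_α`, and at limits one takes unions. -/
def hausdorffIter (L : Type*) [LinearOrder L] (γ : Ordinal.{0}) : L → L → Prop :=
  Ordinal.limitRecOn (motive := fun _ => L → L → Prop) γ Eq
    (fun _ IH => hausdorffRel IH)
    (fun γ _ IH a b => ∃ β : Ordinal.{0}, ∃ h : β < γ, IH β h a b)

/-- A linear order is scattered if the rationals do not order-embed into it. -/
def Scattered (L : Type*) [LinearOrder L] : Prop :=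
  ¬ ∃ e : ℚ → L, ∀ q r : ℚ, q < r → e q < e r

end

/-- `T⁺ = {σ⌢a : σ ∈ T, σ⌢a ∉ T}` where `a` ranges over all symbols of `ω ∪ Ω ∪ {∞}`.
For a well-founded tree `T`, the order `L_T = T⁺ ∪ [T]` is just `T⁺`, viewed as a
suborder of the lexicographic order on finite sequences of symbols. -/
def Tplus (T : Set (List Symb)) : Set (List Symb) :=
  {l : List Symb | ∃ σ ∈ T, ∃ a : Symb, l = σ ++ [a] ∧ σ ++ [a] ∉ T}


/-! Write `stage T σ + 1` for the rank of a node `σ` and call the points of `T⁺` extending `σ`,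
except `σ⌢∞`, the block of `σ`.

Upper bound: by induction on the rank, the block of `σ` lies in one class of the
`(rank σ)`-th derivative. Between two of its points, `T⁺` is covered by finitely many blocks of
children `σ⌢e` and singletons `σ⌢e⌢∞`, each lying in one class of an earlier derivative.
Together with the point `⟨∞⟩`, the block of the root covers `T⁺`, which therefore collapses at
stage `β + 1`.

Lower bound: `σ⌢0` and `σ⌢∞` are not identified by the `(rank σ)`-th derivative. Otherwise,
by fatness, infinitely many children `σ⌢a` of the next lower rank would have their points
`σ⌢a⌢0` in finitely many classes of the earlier derivative; two of them, `σ⌢a⌢0` and `σ⌢b⌢0`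
with `a < b`, would be identified, hence also `σ⌢a⌢0` and `σ⌢a⌢∞`, against the induction
hypothesis. For a leaf the infinitely many points `σ⌢n` play this role.
-/

namespace List

variable {α : Type*} [LinearOrder α]

theorem append_lt_append_left_iff {s l₁ l₂ : List α} : s ++ l₁ < s ++ l₂ ↔ l₁ < l₂ := by
  induction s with
  | nil => rfl
  | cons a s ih => simpa [cons_lt_cons_iff] using ih

theorem append_le_append_left_iff {s l₁ l₂ : List α} : s ++ l₁ ≤ s ++ l₂ ↔ l₁ ≤ l₂ := by
  simp only [← not_lt, append_lt_append_left_iff]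

theorem le_of_cons_le_cons_head {a b : α} {l₁ l₂ : List α} (h : a :: l₁ ≤ b :: l₂) : a ≤ b :=
  not_lt.mp fun hba => not_lt.mpr h (Lex.rel hba)

theorem singleton_le_cons {a b : α} (h : a ≤ b) (l : List α) : [a] ≤ b :: l := by
  rcases h.lt_or_eq with h | rfl
  · exact le_of_lt (Lex.rel h : [a] < b :: l)
  · cases l with
    | nil => exact le_rfl
    | cons c l => exact le_of_lt (Lex.cons (nil_lt_cons c l) : [a] < a :: c :: l)

theorem IsPrefix.of_le_of_le {σ x y c : List α} (hx : σ <+: x) (hy : σ <+: y)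
    (hxc : x ≤ c) (hcy : c ≤ y) : σ <+: c := by
  induction σ generalizing x y c with
  | nil => exact nil_prefix
  | cons s σ ih =>
    obtain ⟨x, rfl⟩ := hx
    obtain ⟨y, rfl⟩ := hy
    cases c with
    | nil => exact absurd hxc (not_le.mpr (nil_lt_cons _ _))
    | cons t c =>
      obtain rfl : t = s :=
        le_antisymm (le_of_cons_le_cons_head hcy) (le_of_cons_le_cons_head hxc)
      simp only [cons_append, ← not_lt, cons_lt_cons_iff, lt_irrefl, false_or, true_and] at hxc hcy
      exact (prefix_cons_inj _).mpr
        (ih (prefix_append _ _) (prefix_append _ _) (not_lt.mp hxc) (not_lt.mp hcy))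

end List

namespace Symb

theorem le_iff_val_le {a b : Symb} : a ≤ b ↔ a.val ≤ b.val := Iff.rfl

theorem lt_iff_val_lt {a b : Symb} : a < b ↔ a.val < b.val := Iff.rfl

theorem fin_zero_le (a : Symb) : fin 0 ≤ a := by
  cases a <;> simp [le_iff_val_le, val]

theorem lt_infty {a : Symb} (h : a ≠ infty) : a < infty := by
  cases a <;> simp_all only [lt_iff_val_lt, val, WithTop.natCast_lt_top, ne_eq, not_true]

theorem lt_fin_of_ne_infty {a : Symb} (h : a ≠ infty) : ∃ N, a < fin N := by
  cases a with
  | fin n => exact ⟨n + 1, by simp only [lt_iff_val_lt, val, Nat.cast_lt]; omega⟩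
  | pair n => exact ⟨n + 1, by simp only [lt_iff_val_lt, val, Nat.cast_lt]; omega⟩
  | infty => exact absurd rfl h

theorem finite_Iio_fin (N : ℕ) : (Set.Iio (fin N)).Finite := by
  refine ((Set.finite_Iio N).image fin).union ((Set.finite_Iio N).image pair) |>.subset ?_
  rintro (n | n | _) h <;> simp only [Set.mem_Iio, lt_iff_val_lt, val, Nat.cast_lt] at h
  · exact Or.inl ⟨n, by rw [Set.mem_Iio]; omega, rfl⟩
  · exact Or.inr ⟨n, by rw [Set.mem_Iio]; omega, rfl⟩
  · exact absurd h not_top_lt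

theorem finite_Iic {b : Symb} (hb : b ≠ infty) : (Set.Iic b).Finite := by
  obtain ⟨N, hN⟩ := lt_fin_of_ne_infty hb
  exact (finite_Iio_fin N).subset fun a ha => lt_of_le_of_lt ha hN

end Symb

section Hausdorff

variable {L : Type*} [LinearOrder L] {E : L → L → Prop}

structure IsConvexEquiv (E : L → L → Prop) : Prop extends Equivalence E where
  convex : ∀ {a b c}, E a b → a ≤ c → c ≤ b → E a c

theorem isConvexEquiv_eq : IsConvexEquiv (Eq : L → L → Prop) where
  toEquivalence := eq_equivalence
  convex hab hac hcb := le_antisymm hac (hab ▸ hcb)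

theorem hausdorffRel_iff {a b : L} :
    hausdorffRel E a b ↔ ∃ s : Finset L, ∀ c ∈ Set.uIcc a b, ∃ d ∈ s, E c d := by
  simp only [hausdorffRel, Set.uIcc, Set.mem_Icc, and_imp]

theorem IsConvexEquiv.hausdorffRel (hE : IsConvexEquiv E) :
    IsConvexEquiv (_root_.hausdorffRel E) where
  refl a := hausdorffRel_iff.mpr ⟨{a}, fun c hc =>
    ⟨a, Finset.mem_singleton_self a, by
      rw [Set.uIcc_self, Set.mem_singleton_iff] at hc
      exact hc ▸ hE.refl a⟩⟩
  symm := by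
    simp only [hausdorffRel_iff, Set.uIcc_comm]
    exact id
  trans := by
    simp only [hausdorffRel_iff]
    rintro a b c ⟨s, hs⟩ ⟨t, ht⟩
    classical
    refine ⟨s ∪ t, fun d hd => ?_⟩
    rcases Set.uIcc_subset_uIcc_union_uIcc hd with hd | hd
    · obtain ⟨e, he, hde⟩ := hs d hd
      exact ⟨e, Finset.mem_union_left t he, hde⟩
    · obtain ⟨e, he, hde⟩ := ht d hd
      exact ⟨e, Finset.mem_union_right s he, hde⟩
  convex := by
    simp only [hausdorffRel_iff]
    rintro a b c ⟨s, hs⟩ hac hcb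
    exact ⟨s, fun d hd => hs d (Set.uIcc_subset_uIcc_left (Set.mem_uIcc_of_le hac hcb) hd)⟩

theorem IsConvexEquiv.le_hausdorffRel (hE : IsConvexEquiv E) : E ≤ _root_.hausdorffRel E := by
  intro a b hab
  have hmin : E (min a b) (max a b) := by
    rcases le_total a b with h | h
    · simpa [h] using hab
    · simpa [h] using hE.symm hab
  exact ⟨{min a b}, fun c h₁ h₂ =>
    ⟨min a b, Finset.mem_singleton_self _, hE.symm (hE.convex hmin h₁ h₂)⟩⟩

theorem hausdorffRel.exists_ne_rel (hE : Equivalence E) {a b : L} (h : hausdorffRel E a b)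
    {ι : Type*} [Infinite ι] (p : ι → L) (hp : ∀ i, p i ∈ Set.uIcc a b) :
    ∃ i j, i ≠ j ∧ E (p i) (p j) := by
  obtain ⟨s, hs⟩ := hausdorffRel_iff.mp h
  choose d hds hd using fun i => hs (p i) (hp i)
  obtain ⟨i, -, j, -, hij, hdij⟩ := Set.infinite_univ.exists_ne_map_eq_of_mapsTo
    (fun i _ => hds i) s.finite_toSet
  exact ⟨i, j, hij, hE.trans (hd i) (hdij ▸ hE.symm (hd j))⟩

theorem hausdorffRel_of_finite_cover {a b : L} {ι : Type*} {I : Set ι} (hI : I.Finite)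
    (A : ι → Set L) (hcover : Set.uIcc a b ⊆ ⋃ i ∈ I, A i)
    (hA : ∀ i ∈ I, ∀ c ∈ A i, ∀ d ∈ A i, E c d) : hausdorffRel E a b := by
  classical
  let rep : ι → L := fun i => if h : (A i).Nonempty then h.some else a
  refine hausdorffRel_iff.mpr ⟨(hI.image rep).toFinset, fun c hc => ?_⟩
  obtain ⟨i, hi, hci⟩ := Set.mem_iUnion₂.mp (hcover hc)
  have hrep : rep i ∈ A i := by
    have hne : (A i).Nonempty := ⟨c, hci⟩
    simp only [rep, dif_pos hne]
    exact hne.some_mem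
  exact ⟨rep i, (hI.image rep).mem_toFinset.mpr ⟨i, hi, rfl⟩, hA i hi c hci _ hrep⟩

variable (L)

theorem hausdorffIter_zero : hausdorffIter L 0 = Eq := by
  rw [hausdorffIter, Ordinal.limitRecOn_zero]

theorem hausdorffIter_add_one (γ : Ordinal.{0}) :
    hausdorffIter L (γ + 1) = hausdorffRel (hausdorffIter L γ) := by
  rw [hausdorffIter, Ordinal.limitRecOn_add_one]
  rfl

theorem hausdorffIter_of_isSuccLimit {γ : Ordinal.{0}} (hγ : Order.IsSuccLimit γ) (a b : L) :
    hausdorffIter L γ a b ↔ ∃ β < γ, hausdorffIter L β a b := by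
  rw [hausdorffIter, Ordinal.limitRecOn_limit _ _ _ _ hγ]
  simp only [exists_prop]
  rfl

theorem isConvexEquiv_hausdorffIter_and_le (γ : Ordinal.{0}) :
    IsConvexEquiv (hausdorffIter L γ) ∧ ∀ β ≤ γ, hausdorffIter L β ≤ hausdorffIter L γ := by
  induction γ using Ordinal.limitRecOn with
  | zero =>
    refine ⟨hausdorffIter_zero L ▸ isConvexEquiv_eq, fun β hβ => ?_⟩
    rw [nonpos_iff_eq_zero.mp hβ]
  | add_one δ ih =>
    refine ⟨hausdorffIter_add_one L δ ▸ ih.1.hausdorffRel, fun β hβ => ?_⟩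
    rcases hβ.lt_or_eq with hβ | rfl
    · rw [hausdorffIter_add_one]
      exact (ih.2 β (Order.lt_add_one_iff.mp hβ)).trans ih.1.le_hausdorffRel
    · exact le_rfl
  | limit γ hγ ih =>
    simp only [le_iff_lt_or_eq (b := γ), or_imp, forall_and, forall_eq, le_refl, and_true]
    refine ⟨⟨⟨fun a => ?_, fun h => ?_, fun h₁ h₂ => ?_⟩, fun h hac hcb => ?_⟩,
      fun β hβ a b h => (hausdorffIter_of_isSuccLimit L hγ a b).mpr ⟨β, hβ, h⟩⟩
    all_goals simp only [hausdorffIter_of_isSuccLimit L hγ] at *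
    · exact ⟨0, hγ.bot_lt, (ih 0 hγ.bot_lt).1.refl a⟩
    · obtain ⟨β, hβ, h⟩ := h
      exact ⟨β, hβ, (ih β hβ).1.symm h⟩
    · obtain ⟨β₁, hβ₁, h₁⟩ := h₁
      obtain ⟨β₂, hβ₂, h₂⟩ := h₂
      obtain ⟨hE, hle⟩ := ih (max β₁ β₂) (max_lt hβ₁ hβ₂)
      exact ⟨max β₁ β₂, max_lt hβ₁ hβ₂,
        hE.trans (hle β₁ (le_max_left _ _) _ _ h₁) (hle β₂ (le_max_right _ _) _ _ h₂)⟩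
    · obtain ⟨β, hβ, h⟩ := h
      exact ⟨β, hβ, (ih β hβ).1.convex h hac hcb⟩

theorem isConvexEquiv_hausdorffIter (γ : Ordinal.{0}) : IsConvexEquiv (hausdorffIter L γ) :=
  (isConvexEquiv_hausdorffIter_and_le L γ).1

theorem hausdorffIter_mono : Monotone (hausdorffIter L) :=
  fun _ γ h => (isConvexEquiv_hausdorffIter_and_le L γ).2 _ h

end Hausdorff

section Tree

variable {α : Type} {T : Set (List α)} {σ : List α}

theorem mem_prunedAt_iff {γ : Ordinal.{0}} :
    σ ∈ prunedAt T γ ↔ σ ∈ T ∧ ∀ a, σ ++ [a] ∈ T → ∃ β < γ, σ ++ [a] ∈ prunedAt T β := by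
  rw [prunedAt, WellFounded.fix_eq]
  simp only [exists_prop]
  rfl

theorem IllNode.of_append_singleton (hT : IsTree T) {a : α} (h : IllNode T (σ ++ [a])) :
    IllNode T σ := by
  obtain ⟨f, hf⟩ := h
  refine ⟨fun n => Nat.casesOn n a f, fun n => ?_⟩
  cases n with
  | zero => simpa using hT _ (by simpa using hf 0) σ (List.prefix_append σ [a])
  | succ n => simpa [List.ofFn_succ] using hf n

theorem WellFoundedTree.not_illNode (hwf : WellFoundedTree T) (hT : IsTree T) (σ : List α) :
    ¬ IllNode T σ := by
  induction σ using List.reverseRecOn with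
  | nil => exact hwf
  | append_singleton σ a ih => exact fun h => ih (h.of_append_singleton hT)

theorem exists_append_forall_not_mem_prunedAt (hσ : σ ∈ T)
    (h : ∀ γ, σ ∉ prunedAt T γ) : ∃ a, σ ++ [a] ∈ T ∧ ∀ γ, σ ++ [a] ∉ prunedAt T γ := by
  by_contra! hpruned
  choose! g hg using hpruned
  refine h (⨆ a, Order.succ (g a)) (mem_prunedAt_iff.mpr ⟨hσ, fun a ha => ⟨g a, ?_, hg a ha⟩⟩)
  exact (Order.lt_succ _).trans_le (le_ciSup Ordinal.bddAbove_of_small a)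

theorem illNode_of_forall_not_mem_prunedAt (hσ : σ ∈ T) (h : ∀ γ, σ ∉ prunedAt T γ) :
    IllNode T σ := by
  let P : Set (List α) := {τ | τ ∈ T ∧ ∀ γ, τ ∉ prunedAt T γ}
  choose g hg using fun τ : P => exists_append_forall_not_mem_prunedAt τ.2.1 τ.2.2
  let next : P → P := fun τ => ⟨τ.1 ++ [g τ], hg τ⟩
  let f : ℕ → α := fun n => g (next^[n] ⟨σ, hσ, h⟩)
  have hpath : ∀ n, (next^[n] ⟨σ, hσ, h⟩).1 = σ ++ List.ofFn (fun i : Fin n => f i) := by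
    intro n
    induction n with
    | zero => simp
    | succ n ih =>
      rw [Function.iterate_succ_apply', List.ofFn_succ']
      simp only [Fin.val_castSucc, Fin.val_last, List.concat_eq_append, ← List.append_assoc, ← ih]
      rfl
  exact ⟨f, fun n => hpath n ▸ (next^[n] ⟨σ, hσ, h⟩).2.1⟩

noncomputable def stage (T : Set (List α)) (σ : List α) : Ordinal.{0} := sInf {γ | σ ∈ prunedAt T γ}

namespace WellFoundedTree

theorem mem_prunedAt_stage (hwf : WellFoundedTree T) (hT : IsTree T) (hσ : σ ∈ T) :
    σ ∈ prunedAt T (stage T σ) := by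
  have hne : {γ | σ ∈ prunedAt T γ}.Nonempty := by
    by_contra hne
    exact hwf.not_illNode hT σ (illNode_of_forall_not_mem_prunedAt hσ fun γ hγ => hne ⟨γ, hγ⟩)
  exact csInf_mem hne

theorem stage_append_lt (hwf : WellFoundedTree T) (hT : IsTree T) (hσ : σ ∈ T) {a : α}
    (ha : σ ++ [a] ∈ T) : stage T (σ ++ [a]) < stage T σ := by
  obtain ⟨β, hβ, hmem⟩ := (mem_prunedAt_iff.mp (hwf.mem_prunedAt_stage hT hσ)).2 a ha
  exact lt_of_le_of_lt (csInf_le' (s := {γ | σ ++ [a] ∈ prunedAt T γ}) hmem) hβ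

theorem erank_eq (hwf : WellFoundedTree T) (hT : IsTree T) (σ : List α) :
    erank T σ = ((stage T σ + 1 : Ordinal.{0}) : WithTop Ordinal.{0}) := by
  rw [erank, if_neg (hwf.not_illNode hT σ), stage]

end WellFoundedTree

end Tree

section Tplus

open Symb

variable {T : Set (List Symb)}

theorem notMem_of_mem_Tplus {c : List Symb} (hc : c ∈ Tplus T) : c ∉ T := by
  obtain ⟨σ, -, a, rfl, h⟩ := hc
  exact h

theorem eq_of_prefix_of_notMem (hT : IsTree T) {τ c : List Symb} (hc : c ∈ Tplus T)
    (hτ : τ ∉ T) (h : τ <+: c) : c = τ := by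
  obtain ⟨ρ, hρ, a, rfl, -⟩ := hc
  rcases List.prefix_concat_iff.mp h with h | h
  · exact h.symm
  · exact absurd (hT ρ hρ τ h) hτ

theorem exists_eq_append_cons {σ c : List Symb} (hc : c ∈ Tplus T) (hσ : σ ∈ T) (h : σ <+: c) :
    ∃ e w, c = σ ++ e :: w := by
  obtain ⟨_ | ⟨e, w⟩, rfl⟩ := h
  · exact absurd (by simpa using hσ) (notMem_of_mem_Tplus hc)
  · exact ⟨e, w, rfl⟩

/-- `T ⊆ Ω^{<ω}`. -/
def OnlyPairs (T : Set (List Symb)) : Prop := ∀ σ ∈ T, ∀ s ∈ σ, ∃ n, s = pair n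

theorem append_fin_notMem (hΩ : OnlyPairs T) (σ : List Symb) (n : ℕ) : σ ++ [fin n] ∉ T := by
  intro h
  obtain ⟨m, hm⟩ := hΩ _ h (fin n) (by simp)
  cases hm

theorem append_infty_notMem (hΩ : OnlyPairs T) (σ : List Symb) : σ ++ [infty] ∉ T := by
  intro h
  obtain ⟨m, hm⟩ := hΩ _ h infty (by simp)
  cases hm

theorem ne_infty_of_append_mem (hΩ : OnlyPairs T) {σ : List Symb} {a : Symb}
    (h : σ ++ [a] ∈ T) : a ≠ infty := by
  rintro rfl
  exact append_infty_notMem hΩ σ h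

theorem append_fin_mem_Tplus (hΩ : OnlyPairs T) {σ : List Symb} (hσ : σ ∈ T) (n : ℕ) :
    σ ++ [fin n] ∈ Tplus T :=
  ⟨σ, hσ, fin n, rfl, append_fin_notMem hΩ σ n⟩

end Tplus

section Blocks

open Symb

variable {T : Set (List Symb)}

def block (T : Set (List Symb)) (τ : List Symb) : Set (Tplus T) :=
  {c | τ <+: c.1 ∧ c.1 ≠ τ ++ [infty]}

theorem block_subsingleton (hT : IsTree T) {τ : List Symb} (hτ : τ ∉ T) :
    (block T τ).Subsingleton := fun c hc d hd =>
  Subtype.ext ((eq_of_prefix_of_notMem hT c.2 hτ hc.1).trans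
    (eq_of_prefix_of_notMem hT d.2 hτ hd.1).symm)

theorem prefix_of_mem_uIcc {τ : List Symb} {c d x : Tplus T} (hc : τ <+: c.1) (hd : τ <+: d.1)
    (hx : x ∈ Set.uIcc c d) : τ <+: x.1 :=
  List.IsPrefix.of_le_of_le (min_rec' (fun y : Tplus T => τ <+: y.1) hc hd)
    (max_rec' (fun y : Tplus T => τ <+: y.1) hc hd) hx.1 hx.2

theorem exists_uIcc_subset_biUnion_block (hT : IsTree T) (hΩ : OnlyPairs T) {σ : List Symb}
    (hσ : σ ∈ T) {c d : Tplus T} (hc : c ∈ block T σ) (hd : d ∈ block T σ) :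
    ∃ b ≠ infty, Set.uIcc c d ⊆
      ⋃ τ ∈ (fun e => σ ++ [e]) '' Set.Iic b ∪ (fun e => σ ++ [e, infty]) '' Set.Iic b,
        block T τ := by
  have hm : max c d ∈ block T σ := max_rec' (· ∈ block T σ) hc hd
  obtain ⟨b, v, hbv⟩ := exists_eq_append_cons (max c d).2 hσ hm.1
  have hb : b ≠ infty := by
    rintro rfl
    refine hm.2 (eq_of_prefix_of_notMem hT (max c d).2 (append_infty_notMem hΩ σ) ?_)
    rw [hbv]
    simp
  refine ⟨b, hb, fun x hx => ?_⟩
  obtain ⟨e, w, hew⟩ := exists_eq_append_cons x.2 hσ (prefix_of_mem_uIcc hc.1 hd.1 hx)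
  have heb : e ≤ b := by
    have hxm : x.1 ≤ (max c d).1 := hx.2
    rw [hew, hbv, List.append_le_append_left_iff] at hxm
    exact List.le_of_cons_le_cons_head hxm
  simp only [Set.mem_iUnion, exists_prop, Set.mem_union, Set.mem_image, Set.mem_Iic]
  by_cases hxtop : x.1 = σ ++ [e, infty]
  · exact ⟨_, Or.inr ⟨e, heb, rfl⟩, hxtop ▸ List.prefix_refl _, by simp [hxtop]⟩
  · exact ⟨_, Or.inl ⟨e, heb, rfl⟩, by simp [hew], by simpa using hxtop⟩

theorem hausdorffIter_of_mem_block (hT : IsTree T) (hΩ : OnlyPairs T) (hwf : WellFoundedTree T)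
    (τ : List Symb) : ∀ c ∈ block T τ, ∀ d ∈ block T τ,
      hausdorffIter (Tplus T) (stage T τ + 1) c d := by
  induction τ using (InvImage.wf (stage T) wellFounded_lt).induction with
  | _ σ ih =>
  by_cases hσ : σ ∈ T
  swap
  · exact fun c hc d hd => block_subsingleton hT hσ hc hd ▸ (isConvexEquiv_hausdorffIter _ _).refl c
  intro c hc d hd
  obtain ⟨b, hb, hcover⟩ := exists_uIcc_subset_biUnion_block hT hΩ hσ hc hd
  rw [hausdorffIter_add_one]
  refine hausdorffRel_of_finite_cover
    (((finite_Iic hb).image _).union ((finite_Iic hb).image _)) (block T) hcover ?_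
  rintro ρ hρ x hx y hy
  by_cases hρT : ρ ∈ T
  · obtain ⟨e, rfl⟩ : ∃ e, ρ = σ ++ [e] := by
      rcases hρ with ⟨e, -, rfl⟩ | ⟨e, -, rfl⟩
      · exact ⟨e, rfl⟩
      · exact absurd hρT (by simpa using append_infty_notMem hΩ (σ ++ [e]))
    have hlt := hwf.stage_append_lt hT hσ hρT
    exact hausdorffIter_mono _ (Order.add_one_le_of_lt hlt) _ _ (ih _ hlt x hx y hy)
  · exact block_subsingleton hT hρT hx hy ▸ (isConvexEquiv_hausdorffIter _ _).refl x

theorem hausdorffIter_stage_add_two (hT : IsTree T) (hΩ : OnlyPairs T) (hwf : WellFoundedTree T)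
    (τ : List Symb) {c d : Tplus T} (hc : τ <+: c.1) (hd : τ <+: d.1) :
    hausdorffIter (Tplus T) (stage T τ + 1 + 1) c d := by
  rw [hausdorffIter_add_one]
  refine hausdorffRel_of_finite_cover (I := {τ, τ ++ [infty]}) (Set.toFinite _) (block T)
    (fun x hx => ?_) ?_
  · simp only [Set.mem_iUnion, exists_prop, Set.mem_insert_iff, Set.mem_singleton_iff,
      exists_eq_or_imp, exists_eq_left]
    by_cases hxtop : x.1 = τ ++ [infty]
    · exact Or.inr ⟨hxtop ▸ List.prefix_refl _, by simp [hxtop]⟩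
    · exact Or.inl ⟨prefix_of_mem_uIcc hc hd hx, hxtop⟩
  · rintro ρ (rfl | rfl)
    · exact hausdorffIter_of_mem_block hT hΩ hwf ρ
    · exact fun x hx y hy => block_subsingleton hT (append_infty_notMem hΩ _) hx hy ▸
        (isConvexEquiv_hausdorffIter _ _).refl x

end Blocks

section LowerBound

open Symb

variable {T : Set (List Symb)}

theorem append_fin_zero_le (σ : List Symb) (a : Symb) (l : List Symb) :
    σ ++ [fin 0] ≤ σ ++ a :: l :=
  List.append_le_append_left_iff.mpr (List.singleton_le_cons (fin_zero_le a) l)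

theorem append_cons_lt_append_infty (σ : List Symb) {a : Symb} (ha : a ≠ infty) (l : List Symb) :
    σ ++ a :: l < σ ++ [infty] :=
  List.append_lt_append_left_iff.mpr (List.Lex.rel (lt_infty ha))

theorem not_hausdorffIter_stage_add_one (hT : IsTree T) (hΩ : OnlyPairs T)
    (hwf : WellFoundedTree T) (hfat : FatTree T) {σ : List Symb} (hσ : σ ∈ T) {x y : Tplus T}
    (hx : x.1 ≤ σ ++ [fin 0]) (hy : σ ++ [infty] ≤ y.1) :
    ¬ hausdorffIter (Tplus T) (stage T σ + 1) x y := by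
  induction σ using (InvImage.wf (stage T) wellFounded_lt).induction generalizing x y with
  | _ σ ih =>
  have hE := (isConvexEquiv_hausdorffIter (Tplus T) (stage T σ)).toEquivalence
  have hmem : ∀ z : Tplus T, σ ++ [fin 0] ≤ z.1 → z.1 < σ ++ [infty] → z ∈ Set.uIcc x y :=
    fun z h₁ h₂ => Set.mem_uIcc_of_le (hx.trans h₁) (h₂.le.trans hy)
  rw [hausdorffIter_add_one]
  intro h
  rcases eq_or_ne (stage T σ) 0 with h0 | h0
  · let p : ℕ → Tplus T := fun n => ⟨σ ++ [fin n], append_fin_mem_Tplus hΩ hσ n⟩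
    obtain ⟨n, m, hnm, hpnm⟩ := h.exists_ne_rel hE p fun n => hmem (p n)
      (append_fin_zero_le σ _ []) (append_cons_lt_append_infty σ (by simp) [])
    rw [h0, hausdorffIter_zero] at hpnm
    exact hnm (by simpa [p] using hpnm)
  · let S : Set Symb := {a | σ ++ [a] ∈ T ∧ erank T (σ ++ [a]) = stage T σ}
    have hS : S.Infinite := hfat σ hσ _ (by exact_mod_cast Order.one_le_iff_ne_zero.mpr h0)
      (Or.inl (by rw [hwf.erank_eq hT]; exact_mod_cast Order.lt_add_one_iff.mpr le_rfl))
    have hstage : ∀ a ∈ S, stage T (σ ++ [a]) + 1 = stage T σ := fun a ha => by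
      have := ha.2
      rw [hwf.erank_eq hT] at this
      exact_mod_cast this
    have := hS.to_subtype
    let p : S → Tplus T := fun a => ⟨σ ++ [a.1] ++ [fin 0], append_fin_mem_Tplus hΩ a.2.1 0⟩
    have hp : ∀ a, p a ∈ Set.uIcc x y := fun a => by
      refine hmem (p a) ?_ ?_ <;>
        simp only [p, List.append_assoc, List.cons_append, List.nil_append]
      · exact append_fin_zero_le σ a.1 [fin 0]
      · exact append_cons_lt_append_infty σ (ne_infty_of_append_mem hΩ a.2.1) [fin 0]
    have key : ∀ a b : S, a.1 < b.1 → ¬ hausdorffIter (Tplus T) (stage T σ) (p a) (p b) := by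
      intro a b hab
      rw [← hstage a a.2]
      refine ih _ (hwf.stage_append_lt hT hσ a.2.1) a.2.1 le_rfl ?_
      simp only [p, List.append_assoc, List.cons_append, List.nil_append]
      exact List.append_le_append_left_iff.mpr (le_of_lt (List.Lex.rel hab))
    obtain ⟨a, b, hab, habE⟩ := h.exists_ne_rel hE p hp
    rcases lt_or_gt_of_ne (Subtype.coe_injective.ne hab) with hlt | hlt
    · exact key a b hlt habE
    · exact key b a hlt (hE.symm habE)

end LowerBound

/-- if `T ⊆ (2Ω)^{<ω}` is a well-founded fat tree of rank `β`, then the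
Hausdorff rank of the lexicographic order `L_T` on `T⁺` is exactly `β + 1`: the
`(β+1)`-st Hausdorff iterate is total, and no earlier iterate is. -/
theorem hausdorff_rank_of_fat_tree (T : Set (List Symb)) (hTree : IsTree T)
    (hdom : ∀ σ ∈ T, ∀ s ∈ σ, ∃ n : ℕ, s = Symb.pair (2 * n))
    (hroot : ([] : List Symb) ∈ T)
    (hwf : WellFoundedTree T) (hfat : FatTree T)
    (β : Ordinal.{0}) (hβ : erank T [] = (β : WithTop Ordinal.{0})) :
    (∀ a b : {l : List Symb // l ∈ Tplus T}, hausdorffIter {l : List Symb // l ∈ Tplus T} (β + 1) a b) ∧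
      (∀ γ : Ordinal.{0}, γ < β + 1 →
        ∃ a b : {l : List Symb // l ∈ Tplus T}, ¬ hausdorffIter {l : List Symb // l ∈ Tplus T} γ a b) := by
  have hΩ : OnlyPairs T := fun σ hσ s hs => (hdom σ hσ s hs).imp' (2 * ·) fun _ h => h
  obtain rfl : β = stage T [] + 1 := by
    rw [hwf.erank_eq hTree] at hβ
    exact_mod_cast hβ.symm
  refine ⟨fun a b => hausdorffIter_stage_add_two hTree hΩ hwf [] a.1.nil_prefix b.1.nil_prefix,
    fun γ hγ => ⟨⟨[Symb.fin 0], append_fin_mem_Tplus hΩ hroot 0⟩,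
      ⟨[Symb.infty], [], hroot, Symb.infty, rfl, append_infty_notMem hΩ []⟩, fun h => ?_⟩⟩
  exact not_hausdorffIter_stage_add_one hTree hΩ hwf hfat hroot le_rfl le_rfl
    (hausdorffIter_mono _ (Order.lt_add_one_iff.mp hγ) _ _ h)
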